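/- In Ō_q(SL₂), for all i, j ∈ {0, …, N−1} and all k ∈ ℤ: x^i y^j z^k ↼ E = q^{−2(j+k)+1} (i)_{q²} x^{i−1} y^j z^k (interpreted as 0 when i = 0); x^i y^j z^k ↼ F = (−i + 2j + 2k)_{q²} x^{i+1} y^j z^k + q^{−2i} (j)_{q²} x^i y^{j−1} z^k (the second summand interpreted as 0 when j = 0); and x^i y^j z^k ↼ K = q^{2(i−j−k)} x^i y^j z^k. -/

import Mathlib

open scoped TensorProduct

noncomputable section

/-- A subalgebra `A` of a Hopf algebra (or bialgebra) `H` is a *right coideal subalgebra*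
if `Δ(A) ⊆ A ⊗ H`. -/
def IsRightCoidealSubalgebra (k : Type*) {H : Type*} [CommSemiring k] [Semiring H]
    [Algebra k H] [CoalgebraStruct k H] (A : Subalgebra k H) : Prop :=
  ∀ a ∈ A, Coalgebra.comul (R := k) a ∈
    LinearMap.range (TensorProduct.map (Subalgebra.toSubmodule A).subtype
      (LinearMap.id (R := k) (M := H)))

/-- The data of the finite-dimensional quotient `Ū_q(sl₂)` of the quantized enveloping
algebra, realized inside a Hopf algebra `H`: generators `K`, `E`, `F` satisfying the
defining relations, with the prescribed comultiplication, counit and antipode values,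
together with a PBW basis (which pins down `H` as the presented Hopf algebra). -/
structure UqSl2Data (k : Type*) [Field k] (q : k) (N : ℕ) (H : Type*)
    [Ring H] [HopfAlgebra k H] where
  K : H
  E : H
  F : H
  rel_KN : K ^ N = 1
  rel_KE : K * E = q ^ 2 • (E * K)
  rel_KF : K * F = (q ^ 2)⁻¹ • (F * K)
  rel_EN : E ^ N = 0
  rel_FN : F ^ N = 0
  rel_EF : (q - q⁻¹) • (E * F - F * E) = K - K ^ (N - 1)
  comul_K : Coalgebra.comul (R := k) K = K ⊗ₜ[k] K
  comul_E : Coalgebra.comul (R := k) E = E ⊗ₜ[k] K + (1 : H) ⊗ₜ[k] E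
  comul_F : Coalgebra.comul (R := k) F = F ⊗ₜ[k] (1 : H) + (K ^ (N - 1)) ⊗ₜ[k] F
  counit_K : Coalgebra.counit (R := k) K = 1
  counit_E : Coalgebra.counit (R := k) E = 0
  counit_F : Coalgebra.counit (R := k) F = 0
  antipode_K : HopfAlgebra.antipode (R := k) K = K ^ (N - 1)
  antipode_E : HopfAlgebra.antipode (R := k) E = -(E * K ^ (N - 1))
  antipode_F : HopfAlgebra.antipode (R := k) F = -(K * F)
  basis : Module.Basis (Fin N × Fin N × Fin N) k H
  basis_eq : ∀ i j l : Fin N,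
    basis (i, j, l) = E ^ (i : ℕ) * F ^ (j : ℕ) * K ^ (l : ℕ)

namespace UqSl2Data

variable {k : Type*} [Field k] {q : k} {N : ℕ} {H : Type*} [Ring H] [HopfAlgebra k H]

/-- The element `F̃ = (q - q⁻¹) K F`. -/
def Ftilde (D : UqSl2Data k q N H) : H := (q - q⁻¹) • (D.K * D.F)

end UqSl2Data

end

noncomputable section

/-- The data of the finite-dimensional quotient `Ō_q(SL₂)` of the quantized coordinate
algebra, realized inside a Hopf algebra `O`: generators `a`, `b`, `c`, `d` satisfying the
defining relations, the prescribed comultiplication and counit values, and a PBW basis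
`{aⁱ bʲ cˡ}` (which pins down `O` as the presented Hopf algebra). -/
structure OqSL2Data (k : Type*) [Field k] (q : k) (N : ℕ) (O : Type*)
    [Ring O] [HopfAlgebra k O] where
  a : O
  b : O
  c : O
  d : O
  rel_ba : b * a = q • (a * b)
  rel_ca : c * a = q • (a * c)
  rel_bc : b * c = c * b
  rel_db : d * b = q • (b * d)
  rel_dc : d * c = q • (c * d)
  rel_ad : a * d - q⁻¹ • (b * c) = 1
  rel_da : d * a - q • (b * c) = 1
  rel_aN : a ^ N = 1
  rel_dN : d ^ N = 1
  rel_bN : b ^ N = 0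
  rel_cN : c ^ N = 0
  comul_a : Coalgebra.comul (R := k) a = a ⊗ₜ[k] a + b ⊗ₜ[k] c
  comul_b : Coalgebra.comul (R := k) b = a ⊗ₜ[k] b + b ⊗ₜ[k] d
  comul_c : Coalgebra.comul (R := k) c = c ⊗ₜ[k] a + d ⊗ₜ[k] c
  comul_d : Coalgebra.comul (R := k) d = c ⊗ₜ[k] b + d ⊗ₜ[k] d
  counit_a : Coalgebra.counit (R := k) a = 1
  counit_b : Coalgebra.counit (R := k) b = 0
  counit_c : Coalgebra.counit (R := k) c = 0
  counit_d : Coalgebra.counit (R := k) d = 1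
  basis : Module.Basis (Fin N × Fin N × Fin N) k O
  basis_eq : ∀ i j l : Fin N,
    basis (i, j, l) = a ^ (i : ℕ) * b ^ (j : ℕ) * c ^ (l : ℕ)

/-- Given a pairing `B : O × U → k`, the right action `f ↼ u = (f₍₁₎, u) f₍₂₎` of `U`
on `O`. -/
def rAct (k : Type*) [CommSemiring k] {O U : Type*} [Semiring O] [Semiring U]
    [HopfAlgebra k O] [HopfAlgebra k U] (B : O →ₗ[k] U →ₗ[k] k) (f : O) (u : U) : O :=
  TensorProduct.lift ((LinearMap.lsmul k O).comp (B.flip u)) (Coalgebra.comul (R := k) f)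

/-- The unique Hopf pairing `(−,−) : Ō_q(SL₂) × Ū_q(sl₂) → k` whose values on the
generators are the matrix entries of the 2-dimensional representation `ρ` of `Ū_q(sl₂)`
(with `ρ(E) = E₁₂`, `ρ(F) = E₂₁`, `ρ(K) = diag(q, q⁻¹)`). -/
structure UqOqPairing (k : Type*) [Field k] (q : k) (N : ℕ)
    {U O : Type*} [Ring U] [Ring O] [HopfAlgebra k U] [HopfAlgebra k O]
    (DU : UqSl2Data k q N U) (DO : OqSL2Data k q N O) where
  B : O →ₗ[k] U →ₗ[k] k
  pair_mul_left : ∀ (f f' : O) (u : U), B (f * f') u =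
    LinearMap.mul' k k (TensorProduct.map (B f) (B f') (Coalgebra.comul (R := k) u))
  pair_mul_right : ∀ (f : O) (u u' : U), B f (u * u') =
    LinearMap.mul' k k (TensorProduct.map (B.flip u) (B.flip u') (Coalgebra.comul (R := k) f))
  pair_one_left : ∀ u : U, B 1 u = Coalgebra.counit (R := k) u
  pair_one_right : ∀ f : O, B f 1 = Coalgebra.counit (R := k) f
  pair_aE : B DO.a DU.E = 0
  pair_aF : B DO.a DU.F = 0
  pair_aK : B DO.a DU.K = q
  pair_bE : B DO.b DU.E = 1
  pair_bF : B DO.b DU.F = 0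
  pair_bK : B DO.b DU.K = 0
  pair_cE : B DO.c DU.E = 0
  pair_cF : B DO.c DU.F = 1
  pair_cK : B DO.c DU.K = 0
  pair_dE : B DO.d DU.E = 0
  pair_dF : B DO.d DU.F = 0
  pair_dK : B DO.d DU.K = q⁻¹

namespace UqOqPairing

variable {k : Type*} [Field k] {q : k} {N : ℕ} {U O : Type*} [Ring U] [Ring O]
  [HopfAlgebra k U] [HopfAlgebra k O] {DU : UqSl2Data k q N U} {DO : OqSL2Data k q N O}

/-- For a right coideal subalgebra `A` of `Ū_q(sl₂)`, the corresponding right coideal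
subalgebra `A† = { f ∈ Ō_q(SL₂) : f ↼ a = ε(a)f for all a ∈ A }` of `Ō_q(SL₂)`. -/
def dagger (P : UqOqPairing k q N DU DO) (A : Subalgebra k U) : Set O :=
  {f : O | ∀ a ∈ A, rAct k P.B f a = Coalgebra.counit (R := k) a • f}

end UqOqPairing

end

noncomputable section

/-- The `q`-integer `(m)_t = (1 - t^m)/(1 - t)` for `m ∈ ℤ` (so `(0)_t = 0`). -/
def qint {k : Type*} [Field k] (t : k) (m : ℤ) : k := (1 - t ^ m) / (1 - t)

/-!
The right actions of `K` and of `K⁻¹ = K^{N-1}` are multiplicative, and by the coproducts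
`E` and `F` act as twisted derivations: `fg ↼ E = (f ↼ E)(g ↼ K) + f (g ↼ E)` and
`fg ↼ F = (f ↼ F) g + (f ↼ K⁻¹)(g ↼ F)`. As `d^N = 1`, `d` is a unit and `x = b d⁻¹`. The pairing
gives the action on `b`, `c`, `d`, hence on `x` and `y`, and induction on the exponents, with
`yx = q²xy` and `(m + n)_t = (m)_t + t^m (n)_t`, gives it on the monomials. For `dⁿ`, `n ∈ ℤ`,
passing from `n` to `n + 1` multiplies the difference of the two sides of each formula by a
nonzero scalar and by `d` on the right, so it vanishes for all `n` since it does for `n = 0`.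
-/

section QInt

variable {k : Type*} [Field k] {t : k}

theorem qint_zero (t : k) : qint t 0 = 0 := by simp [qint]

theorem qint_one (ht : t ≠ 1) : qint t 1 = 1 := by
  rw [qint, zpow_one, div_self (sub_ne_zero.mpr ht.symm)]

theorem qint_add (ht : t ≠ 1) (ht0 : t ≠ 0) (m n : ℤ) :
    qint t (m + n) = qint t m + t ^ m * qint t n := by
  have : 1 - t ≠ 0 := sub_ne_zero.mpr ht.symm
  simp only [qint, zpow_add₀ ht0]
  field_simp
  ring

theorem qint_two (ht : t ≠ 1) (ht0 : t ≠ 0) : qint t 2 = 1 + t := by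
  rw [show (2 : ℤ) = 1 + 1 from rfl, qint_add ht ht0, qint_one ht, zpow_one, mul_one]

end QInt

section RightAction

variable {k O U : Type*} [CommSemiring k] [Semiring O] [Semiring U]
  [HopfAlgebra k O] [HopfAlgebra k U] {B : O →ₗ[k] U →ₗ[k] k}

theorem rAct_zero_right (f : O) : rAct k B f 0 = 0 := by
  have h : TensorProduct.lift (0 : O →ₗ[k] O →ₗ[k] O) = 0 :=
    TensorProduct.ext' fun _ _ ↦ by simp
  simp [rAct, h]

theorem rAct_one_left (hB : ∀ u, B 1 u = Coalgebra.counit (R := k) u) (u : U) :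
    rAct k B 1 u = Coalgebra.counit (R := k) u • (1 : O) := by
  simp [rAct, Algebra.TensorProduct.one_def, hB]

theorem rAct_one_right (hB : ∀ f, B f 1 = Coalgebra.counit (R := k) f) (f : O) :
    rAct k B f 1 = f := by
  have hlift : TensorProduct.lift ((LinearMap.lsmul k O).comp (B.flip 1)) =
      (TensorProduct.lid k O).toLinearMap ∘ₗ
        LinearMap.rTensor O (Coalgebra.counit (R := k)) := by
    apply TensorProduct.ext'
    intro f g
    simp [hB]
  rw [rAct, hlift, LinearMap.comp_apply, Coalgebra.rTensor_counit_comul]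
  simp

variable (hB : ∀ (f f' : O) (u : U), B (f * f') u =
    LinearMap.mul' k k (TensorProduct.map (B f) (B f') (Coalgebra.comul (R := k) u)))
include hB

theorem rAct_mul_of_comul {u u₁ u₂ u₃ u₄ : U}
    (hu : Coalgebra.comul (R := k) u = u₁ ⊗ₜ[k] u₂ + u₃ ⊗ₜ[k] u₄) (f g : O) :
    rAct k B (f * g) u = rAct k B f u₁ * rAct k B g u₂ + rAct k B f u₃ * rAct k B g u₄ := by
  simp only [rAct, Bialgebra.comul_mul]
  generalize Coalgebra.comul (R := k) f = s
  generalize Coalgebra.comul (R := k) g = s'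
  induction s using TensorProduct.induction_on with
  | zero => simp
  | add s₁ s₂ h₁ h₂ => simp only [add_mul, map_add, h₁, h₂]; abel
  | tmul f₁ f₂ =>
    induction s' using TensorProduct.induction_on with
    | zero => simp
    | add s₁ s₂ h₁ h₂ => simp only [mul_add, map_add, h₁, h₂]; abel
    | tmul g₁ g₂ =>
      simp only [Algebra.TensorProduct.tmul_mul_tmul, TensorProduct.lift.tmul,
        LinearMap.coe_comp, Function.comp_apply, LinearMap.flip_apply, LinearMap.lsmul_apply,
        hB, hu, map_add, TensorProduct.map_tmul, LinearMap.mul'_apply]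
      rw [LinearMap.add_apply, LinearMap.lsmul_apply, LinearMap.lsmul_apply,
        smul_mul_smul_comm, smul_mul_smul_comm]

theorem rAct_mul_of_isGroupLikeElem {g : U} (hg : IsGroupLikeElem k g) (f f' : O) :
    rAct k B (f * f') g = rAct k B f g * rAct k B f' g := by
  have hu : Coalgebra.comul (R := k) g = g ⊗ₜ[k] g + (0 : U) ⊗ₜ[k] (0 : U) := by
    simp [hg.comul_eq_tmul_self]
  rw [rAct_mul_of_comul hB hu, rAct_zero_right, zero_mul, add_zero]

end RightAction

theorem eq_zero_of_succ_eq_smul_mul {k M : Type*} [Field k] [Ring M] [Algebra k M]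
    {S : ℤ → M} {c : k} (hc : c ≠ 0) (u : Mˣ) (h0 : S 0 = 0)
    (hS : ∀ n, S (n + 1) = c • (S n * u)) (n : ℤ) : S n = 0 := by
  induction n using Int.induction_on with
  | zero => exact h0
  | succ n ih => rw [hS, ih, zero_mul, smul_zero]
  | pred n ih =>
    have h := hS (-n - 1)
    rw [sub_add_cancel, ih, eq_comm, smul_eq_zero] at h
    exact u.mul_left_eq_zero.mp (h.resolve_left hc)

namespace OqSL2Data

variable {k : Type*} [Field k] {q : k} {N : ℕ} {O : Type*} [Ring O] [HopfAlgebra k O]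
  (DO : OqSL2Data k q N O) {du : Oˣ} (hdu : (du : O) = DO.d)
include hdu

theorem zpow_mul_eq_smul_mul_zpow (hq0 : q ≠ 0) {e : O} (he : DO.d * e = q • (e * DO.d))
    (n : ℤ) : ↑(du ^ n) * e = q ^ n • (e * ↑(du ^ n)) := by
  refine sub_eq_zero.mp (eq_zero_of_succ_eq_smul_mul hq0 du
    (S := fun n ↦ ↑(du ^ n) * e - q ^ n • (e * ↑(du ^ n))) (by simp) (fun n ↦ ?_) n)
  simp only [zpow_add_one, Units.val_mul, zpow_add_one₀ hq0, hdu]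
  rw [mul_assoc, he, mul_smul_comm]
  simp only [smul_sub, sub_mul, smul_mul_assoc, mul_assoc, smul_smul, mul_comm q]

variable {x y : O} (hx : x = DO.b * ↑du⁻¹) (hy : y = DO.c * DO.d)
include hx

omit hdu in
theorem mul_zpow_eq_b_mul_zpow_sub_one (n : ℤ) : x * ↑(du ^ n) = DO.b * ↑(du ^ (n - 1)) := by
  rw [hx, mul_assoc, ← Units.val_mul, ← zpow_neg_one, ← zpow_add, neg_add_eq_sub]

theorem x_mul_x (hq0 : q ≠ 0) : x * x = q⁻¹ • (DO.b * (DO.b * ↑(du ^ (-1 - 1 : ℤ)))) := by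
  rw [hx, mul_assoc, ← mul_assoc (↑du⁻¹ : O), ← zpow_neg_one,
    DO.zpow_mul_eq_smul_mul_zpow hdu hq0 DO.rel_db, smul_mul_assoc, mul_assoc, ← Units.val_mul,
    ← zpow_add, neg_add_eq_sub, zpow_neg_one q, mul_smul_comm]

include hy

theorem x_mul_y (hq0 : q ≠ 0) : x * y = q⁻¹ • (DO.b * DO.c) := by
  rw [hx, hy, mul_assoc, ← mul_assoc (↑du⁻¹ : O), ← zpow_neg_one,
    DO.zpow_mul_eq_smul_mul_zpow hdu hq0 DO.rel_dc, smul_mul_assoc, mul_assoc, ← hdu,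
    ← Units.val_mul, zpow_neg_one du, inv_mul_cancel, Units.val_one, mul_one, mul_smul_comm,
    zpow_neg_one]

theorem y_mul_x : y * x = q • (DO.b * DO.c) := by
  rw [hx, hy, mul_assoc, ← mul_assoc DO.d, DO.rel_db, smul_mul_assoc, mul_assoc, ← hdu,
    Units.mul_inv, mul_one, mul_smul_comm, DO.rel_bc]

theorem ypow_mul_x (hq0 : q ≠ 0) (j : ℕ) : y ^ j * x = (q ^ 2) ^ j • (x * y ^ j) := by
  have hyx : y * x = q ^ 2 • (x * y) := by
    rw [DO.y_mul_x hdu hx hy, DO.x_mul_y hdu hx hy hq0, smul_smul, sq, mul_assoc,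
      mul_inv_cancel₀ hq0, mul_one]
  induction j with
  | zero => simp
  | succ j ih =>
    rw [pow_succ', mul_assoc, ih, mul_smul_comm, ← mul_assoc, hyx, smul_mul_assoc, smul_smul,
      mul_assoc, ← pow_succ', ← pow_succ]

end OqSL2Data

namespace UqOqPairing

variable {k : Type*} [Field k] {q : k} {N : ℕ} {U O : Type*} [Ring U] [Ring O]
  [HopfAlgebra k U] [HopfAlgebra k O] {DU : UqSl2Data k q N U} {DO : OqSL2Data k q N O}
  (P : UqOqPairing k q N DU DO)

/-- `g` acts on `Ō_q(SL₂)` as `diag(α, α⁻¹)`, like `K` with `α = q`. -/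
structure IsDiagGroupLike (g : U) (α : k) : Prop where
  isGroupLikeElem : IsGroupLikeElem k g
  pair_a : P.B DO.a g = α
  pair_b : P.B DO.b g = 0
  pair_c : P.B DO.c g = 0
  pair_d : P.B DO.d g = α⁻¹

theorem isDiagGroupLike_one : P.IsDiagGroupLike 1 1 where
  isGroupLikeElem := .one
  pair_a := by rw [P.pair_one_right, DO.counit_a]
  pair_b := by rw [P.pair_one_right, DO.counit_b]
  pair_c := by rw [P.pair_one_right, DO.counit_c]
  pair_d := by rw [P.pair_one_right, DO.counit_d, inv_one]

theorem isDiagGroupLike_K : P.IsDiagGroupLike DU.K q where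
  isGroupLikeElem := ⟨DU.counit_K, DU.comul_K⟩
  pair_a := P.pair_aK
  pair_b := P.pair_bK
  pair_c := P.pair_cK
  pair_d := P.pair_dK

variable {P}

theorem IsDiagGroupLike.mul {g g' : U} {α α' : k} (hg : P.IsDiagGroupLike g α)
    (hg' : P.IsDiagGroupLike g' α') : P.IsDiagGroupLike (g * g') (α * α') where
  isGroupLikeElem := hg.isGroupLikeElem.mul hg'.isGroupLikeElem
  pair_a := by simp [P.pair_mul_right, DO.comul_a, hg.pair_a, hg.pair_b, hg'.pair_a, hg'.pair_c]
  pair_b := by simp [P.pair_mul_right, DO.comul_b, hg.pair_a, hg.pair_b, hg'.pair_b, hg'.pair_d]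
  pair_c := by simp [P.pair_mul_right, DO.comul_c, hg.pair_c, hg.pair_d, hg'.pair_a, hg'.pair_c]
  pair_d := by
    simp [P.pair_mul_right, DO.comul_d, hg.pair_c, hg.pair_d, hg'.pair_b, hg'.pair_d, mul_comm]

theorem IsDiagGroupLike.pow {g : U} {α : k} (hg : P.IsDiagGroupLike g α) (n : ℕ) :
    P.IsDiagGroupLike (g ^ n) (α ^ n) := by
  induction n with
  | zero => simpa using P.isDiagGroupLike_one
  | succ n ih => simpa [pow_succ] using ih.mul hg

variable (P) in
theorem isDiagGroupLike_K_pow_pred (hqN : q ^ N = 1) (hN : 0 < N) :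
    P.IsDiagGroupLike (DU.K ^ (N - 1)) q⁻¹ := by
  have : q ^ (N - 1) = q⁻¹ :=
    eq_inv_of_mul_eq_one_left (by rw [← pow_succ, Nat.sub_add_cancel hN, hqN])
  simpa [this] using P.isDiagGroupLike_K.pow (N - 1)

section DiagGroupLike

variable {g : U} {α : k} (hg : P.IsDiagGroupLike g α)
include hg

theorem IsDiagGroupLike.rAct_mul (f f' : O) :
    rAct k P.B (f * f') g = rAct k P.B f g * rAct k P.B f' g :=
  rAct_mul_of_isGroupLikeElem P.pair_mul_left hg.isGroupLikeElem f f'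

theorem IsDiagGroupLike.rAct_one : rAct k P.B (1 : O) g = 1 := by
  rw [rAct_one_left P.pair_one_left, hg.isGroupLikeElem.counit_eq_one, one_smul]

theorem IsDiagGroupLike.rAct_pow {f : O} {c : k} (hf : rAct k P.B f g = c • f) (i : ℕ) :
    rAct k P.B (f ^ i) g = c ^ i • f ^ i := by
  induction i with
  | zero => simp [hg.rAct_one]
  | succ i ih => rw [pow_succ, hg.rAct_mul, ih, hf, smul_mul_smul_comm, ← pow_succ, ← pow_succ]

theorem IsDiagGroupLike.rAct_b : rAct k P.B DO.b g = α • DO.b := by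
  simp [rAct, DO.comul_b, hg.pair_a, hg.pair_b]

theorem IsDiagGroupLike.rAct_c : rAct k P.B DO.c g = α⁻¹ • DO.c := by
  simp [rAct, DO.comul_c, hg.pair_c, hg.pair_d]

theorem IsDiagGroupLike.rAct_d : rAct k P.B DO.d g = α⁻¹ • DO.d := by
  simp [rAct, DO.comul_d, hg.pair_c, hg.pair_d]

end DiagGroupLike

theorem rAct_mul_E (f f' : O) :
    rAct k P.B (f * f') DU.E =
      rAct k P.B f DU.E * rAct k P.B f' DU.K + f * rAct k P.B f' DU.E := by
  rw [rAct_mul_of_comul P.pair_mul_left DU.comul_E, rAct_one_right P.pair_one_right]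

theorem rAct_mul_F (f f' : O) :
    rAct k P.B (f * f') DU.F =
      rAct k P.B f DU.F * f' + rAct k P.B f (DU.K ^ (N - 1)) * rAct k P.B f' DU.F := by
  rw [rAct_mul_of_comul P.pair_mul_left DU.comul_F, rAct_one_right P.pair_one_right]

theorem rAct_one_E : rAct k P.B (1 : O) DU.E = 0 := by
  rw [rAct_one_left P.pair_one_left, DU.counit_E, zero_smul]

theorem rAct_one_F : rAct k P.B (1 : O) DU.F = 0 := by
  rw [rAct_one_left P.pair_one_left, DU.counit_F, zero_smul]

theorem rAct_b_E : rAct k P.B DO.b DU.E = DO.d := by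
  simp [rAct, DO.comul_b, P.pair_aE, P.pair_bE]

theorem rAct_c_E : rAct k P.B DO.c DU.E = 0 := by
  simp [rAct, DO.comul_c, P.pair_cE, P.pair_dE]

theorem rAct_d_E : rAct k P.B DO.d DU.E = 0 := by
  simp [rAct, DO.comul_d, P.pair_cE, P.pair_dE]

theorem rAct_b_F : rAct k P.B DO.b DU.F = 0 := by
  simp [rAct, DO.comul_b, P.pair_aF, P.pair_bF]

theorem rAct_c_F : rAct k P.B DO.c DU.F = DO.a := by
  simp [rAct, DO.comul_c, P.pair_cF, P.pair_dF]

theorem rAct_d_F : rAct k P.B DO.d DU.F = DO.b := by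
  simp [rAct, DO.comul_d, P.pair_cF, P.pair_dF]

variable {du : Oˣ} (hdu : (du : O) = DO.d) (hq0 : q ≠ 0)
  (hK' : P.IsDiagGroupLike (DU.K ^ (N - 1)) q⁻¹)
include hdu

theorem IsDiagGroupLike.rAct_zpow {g : U} {α : k} (hg : P.IsDiagGroupLike g α) (hα : α ≠ 0)
    (n : ℤ) : rAct k P.B ↑(du ^ n) g = α ^ (-n) • (↑(du ^ n) : O) := by
  refine sub_eq_zero.mp (eq_zero_of_succ_eq_smul_mul (inv_ne_zero hα) du
    (S := fun n ↦ rAct k P.B ↑(du ^ n) g - α ^ (-n) • (↑(du ^ n) : O)) ?_ (fun n ↦ ?_) n)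
  · simp [hg.rAct_one]
  simp only [zpow_add_one, Units.val_mul, hg.rAct_mul, hdu, hg.rAct_d, neg_add, zpow_add₀ hα,
    zpow_neg_one]
  simp only [smul_sub, sub_mul, mul_smul_comm, smul_mul_assoc, smul_smul, mul_comm]

include hq0

theorem rAct_zpow_E (n : ℤ) : rAct k P.B ↑(du ^ n) DU.E = 0 := by
  refine eq_zero_of_succ_eq_smul_mul (inv_ne_zero hq0) du
    (S := fun n ↦ rAct k P.B ↑(du ^ n) DU.E) (by simp [rAct_one_E]) (fun n ↦ ?_) n
  simp [zpow_add_one, rAct_mul_E, hdu, rAct_d_E, (isDiagGroupLike_K P).rAct_d]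

variable (hq2 : q ^ 2 ≠ 1)
include hK' hq2

theorem rAct_zpow_F (n : ℤ) :
    rAct k P.B ↑(du ^ n) DU.F = qint (q ^ 2) n • (DO.b * ↑(du ^ (n - 1))) := by
  refine sub_eq_zero.mp (eq_zero_of_succ_eq_smul_mul (one_ne_zero (α := k)) du
    (S := fun n ↦ rAct k P.B ↑(du ^ n) DU.F - qint (q ^ 2) n • (DO.b * ↑(du ^ (n - 1)))) ?_
    (fun n ↦ ?_) n)
  · simp [rAct_one_F, qint_zero]
  have hshift : DO.b * ↑(du ^ (n - 1)) * DO.d = DO.b * ↑(du ^ n) := by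
    rw [← hdu, mul_assoc, ← Units.val_mul, ← zpow_add_one, sub_add_cancel]
  simp only [zpow_add_one, Units.val_mul, rAct_mul_F, hdu, rAct_d_F,
    hK'.rAct_zpow hdu (inv_ne_zero hq0), qint_add hq2 (pow_ne_zero 2 hq0), qint_one hq2]
  rw [add_sub_cancel_right, inv_zpow', neg_neg, smul_mul_assoc,
    DO.zpow_mul_eq_smul_mul_zpow hdu hq0 DO.rel_db, sq, mul_zpow, one_smul, sub_mul,
    smul_mul_assoc, hshift]
  module

omit hq0 hK' hq2

variable {x y : O} (hx : x = DO.b * ↑du⁻¹) (hy : y = DO.c * DO.d)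

include hx in
theorem IsDiagGroupLike.rAct_x {g : U} {α : k} (hg : P.IsDiagGroupLike g α) (hα : α ≠ 0) :
    rAct k P.B x g = α ^ 2 • x := by
  rw [hx, hg.rAct_mul, hg.rAct_b, ← zpow_neg_one, hg.rAct_zpow hdu hα, neg_neg, zpow_one,
    smul_mul_smul_comm, sq]

include hx in
theorem IsDiagGroupLike.rAct_xpow {g : U} {α : k} (hg : P.IsDiagGroupLike g α) (hα : α ≠ 0)
    (i : ℕ) : rAct k P.B (x ^ i) g = (α ^ 2) ^ i • x ^ i :=
  hg.rAct_pow (hg.rAct_x hdu hx hα) i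

omit hdu in
include hy in
theorem IsDiagGroupLike.rAct_ypow {g : U} {α : k} (hg : P.IsDiagGroupLike g α) (j : ℕ) :
    rAct k P.B (y ^ j) g = ((α ^ 2)⁻¹) ^ j • y ^ j := by
  refine hg.rAct_pow ?_ j
  rw [hy, hg.rAct_mul, hg.rAct_c, hg.rAct_d, smul_mul_smul_comm, sq, mul_inv]

omit hdu in
include hy in
theorem rAct_ypow_E (j : ℕ) : rAct k P.B (y ^ j) DU.E = 0 := by
  induction j with
  | zero => simp [rAct_one_E]
  | succ j ih =>
    rw [pow_succ, rAct_mul_E, ih, zero_mul, zero_add, hy, rAct_mul_E, rAct_c_E, rAct_d_E,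
      zero_mul, mul_zero, add_zero, mul_zero]

include hq0 hx

theorem rAct_x_E : rAct k P.B x DU.E = q • 1 := by
  rw [hx, rAct_mul_E, rAct_b_E, ← zpow_neg_one, (isDiagGroupLike_K P).rAct_zpow hdu hq0,
    rAct_zpow_E hdu hq0, mul_zero, add_zero, neg_neg, zpow_one, mul_smul_comm, ← hdu,
    zpow_neg_one, Units.mul_inv]

include hq2 in
theorem rAct_xpow_E (i : ℕ) :
    rAct k P.B (x ^ i) DU.E = (q * qint (q ^ 2) i) • x ^ (i - 1) := by
  induction i with
  | zero => simp [rAct_one_E, qint_zero]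
  | succ i ih =>
    rw [pow_succ, rAct_mul_E, ih, (isDiagGroupLike_K P).rAct_x hdu hx hq0,
      rAct_x_E hdu hq0 hx, Nat.cast_succ, add_comm (i : ℤ), qint_add hq2 (pow_ne_zero 2 hq0),
      qint_one hq2, zpow_one, Nat.add_sub_cancel]
    rcases i with _ | i
    · simp [qint_zero]
    · rw [smul_mul_smul_comm, Nat.add_sub_cancel, ← pow_succ, mul_smul_comm, mul_one]
      module

include hy hq2 in
theorem rAct_monomial_E (i j : ℕ) (n : ℤ) :
    rAct k P.B (x ^ i * y ^ j * ↑(du ^ n)) DU.E =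
      (q ^ (-2 * (j : ℤ) - n + 1) * qint (q ^ 2) i) • (x ^ (i - 1) * y ^ j * ↑(du ^ n)) := by
  have hK := isDiagGroupLike_K P
  rw [rAct_mul_E, rAct_mul_E, rAct_xpow_E hdu hq0 hq2 hx, hK.rAct_ypow hy, rAct_ypow_E hy,
    hK.rAct_zpow hdu hq0, rAct_zpow_E hdu hq0, mul_zero, add_zero, mul_zero, add_zero,
    smul_mul_smul_comm, smul_mul_smul_comm]
  congr 1
  rw [zpow_add₀ hq0, zpow_sub₀ hq0, zpow_neg, neg_mul, zpow_neg, zpow_mul]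
  simp [div_eq_mul_inv]
  ring

include hK' hq2

theorem rAct_x_F : rAct k P.B x DU.F = qint (q ^ 2) (-1) • (x * x) := by
  rw [DO.x_mul_x hdu hx hq0, hx, rAct_mul_F, rAct_b_F, zero_mul, zero_add, hK'.rAct_b,
    ← zpow_neg_one du, rAct_zpow_F hdu hq0 hK' hq2, smul_mul_smul_comm, smul_smul, mul_comm]

theorem rAct_xpow_F (i : ℕ) : rAct k P.B (x ^ i) DU.F = qint (q ^ 2) (-i) • x ^ (i + 1) := by
  induction i with
  | zero => simp [rAct_one_F, qint_zero]
  | succ i ih =>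
    rw [pow_succ, rAct_mul_F, ih, rAct_x_F hdu hq0 hK' hq2 hx,
      hK'.rAct_xpow hdu hx (inv_ne_zero hq0), smul_mul_assoc, smul_mul_smul_comm,
      ← pow_succ, ← mul_assoc, ← pow_succ, ← pow_succ, ← add_smul, Nat.cast_succ, neg_add,
      qint_add hq2 (pow_ne_zero 2 hq0), zpow_neg, zpow_natCast, inv_pow, inv_pow]

include hy

omit hq2 in
theorem rAct_y_F : rAct k P.B y DU.F = 1 + (1 + q ^ 2) • (x * y) := by
  have had : DO.a * DO.d = 1 + q⁻¹ • (DO.b * DO.c) := by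
    linear_combination (norm := noncomm_ring) DO.rel_ad
  rw [DO.x_mul_y hdu hx hy hq0, hy, rAct_mul_F, rAct_c_F, rAct_d_F, hK'.rAct_c, had, inv_inv,
    smul_mul_assoc, ← DO.rel_bc, smul_smul, add_assoc, ← add_smul]
  congr 2
  field_simp

theorem rAct_ypow_F (j : ℕ) :
    rAct k P.B (y ^ j) DU.F =
      qint (q ^ 2) (2 * j) • (x * y ^ j) + qint (q ^ 2) j • y ^ (j - 1) := by
  have ht0 : q ^ 2 ≠ 0 := pow_ne_zero 2 hq0
  induction j with
  | zero => simp [rAct_one_F, qint_zero]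
  | succ j ih =>
    have hyxy : y ^ j * (x * y) = (q ^ 2) ^ j • (x * y ^ (j + 1)) := by
      rw [← mul_assoc, DO.ypow_mul_x hdu hx hy hq0, smul_mul_assoc, mul_assoc, ← pow_succ]
    have hpred : qint (q ^ 2) j • (y ^ (j - 1) * y) = qint (q ^ 2) j • y ^ j := by
      rcases j with _ | j
      · simp [qint_zero]
      · rw [Nat.add_sub_cancel, ← pow_succ]
    rw [pow_succ, rAct_mul_F, ih, hK'.rAct_ypow hy, rAct_y_F hdu hq0 hK' hx hy, add_mul,
      smul_mul_assoc, smul_mul_assoc, mul_assoc x, ← pow_succ, hpred, smul_mul_assoc, mul_add,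
      mul_one, mul_smul_comm, hyxy, Nat.add_sub_cancel, Nat.cast_succ, mul_add, mul_one,
      qint_add hq2 ht0 _ 2, qint_add hq2 ht0 _ 1, qint_two hq2 ht0, qint_one hq2,
      mul_comm 2 (j : ℤ), zpow_mul, zpow_natCast, zpow_two]
    match_scalars <;> simp only [inv_pow, inv_inv] <;> ring

theorem rAct_monomial_F (i j : ℕ) (n : ℤ) :
    rAct k P.B (x ^ i * y ^ j * ↑(du ^ n)) DU.F =
      qint (q ^ 2) (-(i : ℤ) + 2 * j + n) • (x ^ (i + 1) * y ^ j * ↑(du ^ n)) +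
        (q ^ (-2 * (i : ℤ)) * qint (q ^ 2) j) • (x ^ i * y ^ (j - 1) * ↑(du ^ n)) := by
  have ht0 : q ^ 2 ≠ 0 := pow_ne_zero 2 hq0
  have hxyx :
      x ^ i * y ^ j * x * ↑(du ^ n) = (q ^ 2) ^ j • (x ^ (i + 1) * y ^ j * ↑(du ^ n)) := by
    rw [mul_assoc (x ^ i), DO.ypow_mul_x hdu hx hy hq0, mul_smul_comm, smul_mul_assoc,
      ← mul_assoc, ← pow_succ]
  rw [rAct_mul_F, rAct_mul_F, hK'.rAct_mul, rAct_xpow_F hdu hq0 hK' hq2 hx,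
    hK'.rAct_xpow hdu hx (inv_ne_zero hq0), hK'.rAct_ypow hy,
    rAct_ypow_F hdu hq0 hK' hq2 hx hy, rAct_zpow_F hdu hq0 hK' hq2,
    ← DO.mul_zpow_eq_b_mul_zpow_sub_one hx]
  simp only [smul_mul_assoc, mul_smul_comm, mul_add, add_mul, ← mul_assoc, ← pow_succ, hxyx]
  rw [add_assoc (-(i : ℤ)), qint_add hq2 ht0, qint_add hq2 ht0]
  match_scalars <;>
    simp only [zpow_neg, zpow_mul, zpow_natCast, zpow_ofNat, inv_pow, inv_inv] <;> ring

omit hq0 hK' hq2 in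
include hy in
theorem IsDiagGroupLike.rAct_monomial {g : U} {α : k} (hg : P.IsDiagGroupLike g α)
    (hα : α ≠ 0) (i j : ℕ) (n : ℤ) :
    rAct k P.B (x ^ i * y ^ j * ↑(du ^ n)) g =
      α ^ (2 * (i : ℤ) - 2 * j - n) • (x ^ i * y ^ j * ↑(du ^ n)) := by
  rw [hg.rAct_mul, hg.rAct_mul, hg.rAct_xpow hdu hx hα, hg.rAct_ypow hy, hg.rAct_zpow hdu hα,
    smul_mul_smul_comm, smul_mul_smul_comm]
  congr 1
  rw [zpow_sub₀ hα, zpow_sub₀ hα, zpow_neg, zpow_mul, zpow_mul]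
  simp [div_eq_mul_inv]

end UqOqPairing

theorem rAct_on_xyz_monomials_general
    {k : Type*} [Field k] {q : k} {N : ℕ}
    (hN : Odd N) (hN1 : 1 < N) (hq : IsPrimitiveRoot q N)
    {U O : Type*} [Ring U] [Ring O] [HopfAlgebra k U] [HopfAlgebra k O]
    (DU : UqSl2Data k q N U) (DO : OqSL2Data k q N O) (P : UqOqPairing k q N DU DO)
    (x y : O) (hx : x = DO.b * DO.d ^ (N - 1)) (hy : y = DO.c * DO.d)
    (du : Oˣ) (hdu : (du : O) = DO.d)
    (i j : ℕ) (kk : ℤ) :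
    rAct k P.B (x ^ i * y ^ j * ((du ^ (2 * kk) : Oˣ) : O)) DU.E
        = (q ^ (-2 * ((j : ℤ) + kk) + 1) * qint (q ^ 2) (i : ℤ)) •
            (x ^ (i - 1) * y ^ j * ((du ^ (2 * kk) : Oˣ) : O)) ∧
    rAct k P.B (x ^ i * y ^ j * ((du ^ (2 * kk) : Oˣ) : O)) DU.F
        = qint (q ^ 2) (-(i : ℤ) + 2 * j + 2 * kk) •
            (x ^ (i + 1) * y ^ j * ((du ^ (2 * kk) : Oˣ) : O))
          + (q ^ (-2 * (i : ℤ)) * qint (q ^ 2) (j : ℤ)) •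
            (x ^ i * y ^ (j - 1) * ((du ^ (2 * kk) : Oˣ) : O)) ∧
    rAct k P.B (x ^ i * y ^ j * ((du ^ (2 * kk) : Oˣ) : O)) DU.K
        = q ^ (2 * ((i : ℤ) - j - kk)) •
            (x ^ i * y ^ j * ((du ^ (2 * kk) : Oˣ) : O)) := by
  have hN0 : 0 < N := by omega
  have hq0 : q ≠ 0 := hq.ne_zero hN0.ne'
  have hq2 : q ^ 2 ≠ 1 := by
    rw [Ne, hq.pow_eq_one_iff_dvd]
    intro h2
    obtain rfl : N = 2 := by have := Nat.le_of_dvd two_pos h2; omega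
    exact Nat.not_odd_iff_even.mpr even_two hN
  have hK' := UqOqPairing.isDiagGroupLike_K_pow_pred P hq.pow_eq_one hN0
  have hx' : x = DO.b * ↑du⁻¹ := by
    rw [hx, Units.inv_eq_of_mul_eq_one_right]
    rw [hdu, ← pow_succ', Nat.sub_add_cancel hN0, DO.rel_dN]
  refine ⟨?_, UqOqPairing.rAct_monomial_F hdu hq0 hK' hq2 hx' hy i j _, ?_⟩
  · rw [UqOqPairing.rAct_monomial_E hdu hq0 hq2 hx' hy,
      show -2 * (j : ℤ) - 2 * kk + 1 = -2 * (j + kk) + 1 by ring]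
  · rw [(UqOqPairing.isDiagGroupLike_K P).rAct_monomial hdu hx' hy hq0,
      show 2 * (i : ℤ) - 2 * j - 2 * kk = 2 * (i - j - kk) by ring]

/-- **Theorem.** In `Ō_q(SL₂)`, with `x = bd^{N-1}`, `y = cd`, `z = d²`, for all
`0 ≤ i, j ≤ N-1` and all `k ∈ ℤ`:
`xⁱyʲzᵏ ↼ E = q^{-2(j+k)+1} (i)_{q²} x^{i-1} yʲ zᵏ`,
`xⁱyʲzᵏ ↼ F = (-i+2j+2k)_{q²} x^{i+1} yʲ zᵏ + q^{-2i} (j)_{q²} xⁱ y^{j-1} zᵏ`, and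
`xⁱyʲzᵏ ↼ K = q^{2(i-j-k)} xⁱ yʲ zᵏ`. -/
theorem rAct_on_xyz_monomials
    {k : Type*} [Field k] [IsAlgClosed k] [CharZero k] {q : k} {N : ℕ}
    (hN : Odd N) (hN1 : 1 < N) (hq : IsPrimitiveRoot q N)
    {U O : Type*} [Ring U] [Ring O] [HopfAlgebra k U] [HopfAlgebra k O]
    (DU : UqSl2Data k q N U) (DO : OqSL2Data k q N O) (P : UqOqPairing k q N DU DO)
    (x y : O) (hx : x = DO.b * DO.d ^ (N - 1)) (hy : y = DO.c * DO.d)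
    (du : Oˣ) (hdu : (du : O) = DO.d)
    (i j : ℕ) (hi : i < N) (hj : j < N) (kk : ℤ) :
    rAct k P.B (x ^ i * y ^ j * ((du ^ (2 * kk) : Oˣ) : O)) DU.E
        = (q ^ (-2 * ((j : ℤ) + kk) + 1) * qint (q ^ 2) (i : ℤ)) •
            (x ^ (i - 1) * y ^ j * ((du ^ (2 * kk) : Oˣ) : O)) ∧
    rAct k P.B (x ^ i * y ^ j * ((du ^ (2 * kk) : Oˣ) : O)) DU.F
        = qint (q ^ 2) (-(i : ℤ) + 2 * j + 2 * kk) •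
            (x ^ (i + 1) * y ^ j * ((du ^ (2 * kk) : Oˣ) : O))
          + (q ^ (-2 * (i : ℤ)) * qint (q ^ 2) (j : ℤ)) •
            (x ^ i * y ^ (j - 1) * ((du ^ (2 * kk) : Oˣ) : O)) ∧
    rAct k P.B (x ^ i * y ^ j * ((du ^ (2 * kk) : Oˣ) : O)) DU.K
        = q ^ (2 * ((i : ℤ) - j - kk)) •
            (x ^ i * y ^ j * ((du ^ (2 * kk) : Oˣ) : O)) :=
  rAct_on_xyz_monomials_general hN hN1 hq DU DO P x y hx hy du hdu i j kk

end
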